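/- Assume q^{2l} = 1 where l ≥ 2 is the smallest positive integer with this property. Let c, x₀ ∈ ℂ and x₊ ∈ ℂ with x₊ ≠ 0; set c'₂ := q²x₀² − qcx₀ and d² := c² − λ²c'₂. Let V = ℂ^l with basis w₀, …, w_{l−1} and define: ρ_C w_p = c w_p; ρ₀ w_p = (q^{−2p} x₀ + q^{−p} [p] c) w_p; ρ₊ w_p = x₊ w_{p+1 mod l}; ρ₋ w₀ = 0 and, for 1 ≤ p ≤ l−1, ρ₋ w_p = x₊⁻¹ λ⁻² ( −d² + (1+q²) c (c−λx₀) q^{−2p} − q² (c−λx₀)² q^{−4p} ) w_{p−1}. Then (ρ₀, ρ₊, ρ₋, ρ_C) is a representation of B on V, and if moreover c − λx₀ ≠ 0 it is irreducible. -/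

import Mathlib

/-!
In the basis `w_p`, `ρ₀` is diagonal, `ρ₊` is `x₊` times the cyclic shift and `ρ₋` is the
inverse shift composed with a diagonal matrix. Writing `u = q^{-2p}`, the eigenvalue of `ρ₀`
on `w_p` is `μ(u) = (c - (c - λx₀)u)/λ` and `x₊` times the entry of `ρ₋` is `λ⁻²φ(u)` for a
quadratic `φ`. As `q⁻²` is a primitive `l`-th root of unity, the shift multiplies `u` by `q⁻²`
also across the wrap-around, so the defining relations reduce to two identities,
`q²μ(q⁻²u) - μ(u) = qc` and `φ(u) - φ(q⁻²u) = λ²(q + q⁻¹)(c - λμ(u))μ(u)`; the choice of `d²`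
makes `φ(1) = 0`, so `ρ₋ w₀ = 0` agrees with the cyclic formula.

If `c - λx₀ ≠ 0` the eigenvalues `μ(q^{-2p})` are distinct, so an invariant subspace is spanned
by the basis vectors it contains (Lagrange interpolation in `ρ₀`), and the full cycle `ρ₊`
moves any one of them to all the others.
-/

noncomputable section

namespace SL2q

/-- The q-number [p] = (q^p − q^{−p})/(q − q⁻¹). -/
def qNum (q : ℂ) (p : ℕ) : ℂ := (q ^ p - q⁻¹ ^ p) / (q - q⁻¹)

end SL2q

open Matrix Polynomial Equiv

theorem val_finRotate {l : ℕ} (j : Fin l) : (finRotate l j : ℕ) = ((j : ℕ) + 1) % l := by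
  obtain ⟨m, rfl⟩ : ∃ m, l = m + 1 := ⟨l - 1, by have := j.pos; omega⟩
  rw [coe_finRotate]
  split_ifs with h
  · simp [h]
  · rw [Nat.mod_eq_of_lt]
    have := Fin.val_lt_last h
    omega

theorem pow_val_finRotate {M : Type*} [Monoid M] {ζ : M} {l : ℕ} (hζ : ζ ^ l = 1) (j : Fin l) :
    ζ ^ (finRotate l j : ℕ) = ζ * ζ ^ (j : ℕ) := by
  rw [val_finRotate, ← pow_eq_pow_mod _ hζ, pow_succ']

namespace Matrix

section Permutation

variable {n R : Type*} [DecidableEq n]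

theorem permMatrix_apply [Zero R] [One R] (σ : Perm n) (i j : n) :
    σ.permMatrix R i j = if σ i = j then 1 else 0 := by
  simp [Perm.permMatrix, PEquiv.toMatrix_apply]

variable [Fintype n] [NonAssocSemiring R]

@[simp]
theorem permMatrix_mul_apply (σ : Perm n) (M : Matrix n n R) (i j : n) :
    (σ.permMatrix R * M) i j = M (σ i) j := by
  rw [Perm.permMatrix, PEquiv.toMatrix_toPEquiv_mul, submatrix_apply, id]

@[simp]
theorem mul_permMatrix_apply (σ : Perm n) (M : Matrix n n R) (i j : n) :
    (M * σ.permMatrix R) i j = M i (σ⁻¹ j) := by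
  rw [Perm.permMatrix, PEquiv.mul_toMatrix_toPEquiv, submatrix_apply, id, Perm.inv_def]

theorem permMatrix_mulVec_single (σ : Perm n) (i : n) :
    σ.permMatrix R *ᵥ Pi.single i 1 = Pi.single (σ⁻¹ i) 1 := by
  ext j
  simp [Pi.single_apply, Perm.inv_def, Equiv.eq_symm_apply]

end Permutation

theorem of_eq_succ_mod_eq_smul_permMatrix {K : Type*} [Semiring K] {l : ℕ} (x : K) :
    Matrix.of (fun i j : Fin l => if (i : ℕ) = ((j : ℕ) + 1) % l then x else 0) =
      x • (finRotate l)⁻¹.permMatrix K := by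
  ext i j
  simp only [of_apply, Matrix.smul_apply, permMatrix_apply, Perm.inv_eq_iff_eq, ← val_finRotate,
    Fin.val_inj]
  split_ifs <;> simp

theorem of_succ_eq_eq_permMatrix_mul_diagonal {K : Type*} [Semiring K] {l : ℕ} (f : ℕ → K)
    (hf : f 0 = 0) :
    Matrix.of (fun i j : Fin l => if (i : ℕ) + 1 = j then f j else 0) =
      (finRotate l).permMatrix K * diagonal (fun j : Fin l => f j) := by
  ext i j
  simp only [of_apply, mul_diagonal, permMatrix_apply, ← Fin.val_inj, val_finRotate]
  rcases Nat.lt_or_ge ((i : ℕ) + 1) l with hi | hi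
  · rw [Nat.mod_eq_of_lt hi]
    split_ifs <;> simp
  · have hil : (i : ℕ) + 1 = l := le_antisymm i.isLt hi
    rw [hil, Nat.mod_self, if_neg j.isLt.ne']
    split_ifs with hj
    · rw [← hj, hf, mul_zero]
    · rw [zero_mul]

section Diagonal

variable {n K : Type*} [Fintype n] [DecidableEq n] [Field K]

theorem aeval_diagonal (d : n → K) (p : K[X]) :
    aeval (diagonal d) p = diagonal fun i => p.eval (d i) := by
  simpa [aeval_pi_apply] using aeval_algHom_apply (diagonalAlgHom K) d p

theorem aeval_mulVec_mem {A : Matrix n n K} {W : Submodule K (n → K)}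
    (hA : ∀ v ∈ W, A *ᵥ v ∈ W) (p : K[X]) {v : n → K} (hv : v ∈ W) :
    aeval A p *ᵥ v ∈ W := by
  induction p using Polynomial.induction_on' with
  | add p r hp hr => simpa [add_mulVec] using W.add_mem hp hr
  | monomial k a =>
    have hpow : A ^ k *ᵥ v ∈ W := by
      induction k with
      | zero => simpa using hv
      | succ k ih => simpa [pow_succ', ← mulVec_mulVec] using hA _ ih
    simpa [aeval_monomial, Algebra.algebraMap_eq_smul_one, smul_mulVec] using W.smul_mem a hpow

theorem single_mem_of_diagonal_mulVec_mem {μ : n → K} (hμ : Function.Injective μ)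
    {W : Submodule K (n → K)} (hW : ∀ v ∈ W, diagonal μ *ᵥ v ∈ W) {v : n → K} (hv : v ∈ W)
    {i : n} (hvi : v i ≠ 0) : Pi.single i 1 ∈ W := by
  have hbasis :
      aeval (diagonal μ) (Lagrange.basis Finset.univ μ i) = diagonal (Pi.single i 1) := by
    rw [aeval_diagonal]
    congr 1
    ext j
    rcases eq_or_ne i j with rfl | hij
    · simp [Lagrange.eval_basis_self hμ.injOn]
    · simp [Lagrange.eval_basis_of_ne hij, hij.symm]
  have := W.smul_mem (v i)⁻¹ (aeval_mulVec_mem hW (Lagrange.basis Finset.univ μ i) hv)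
  rw [hbasis] at this
  convert this using 1
  ext j
  rcases eq_or_ne j i with rfl | hij
  · simp [mulVec_diagonal, hvi]
  · simp [mulVec_diagonal, hij]

end Diagonal

end Matrix

namespace SL2q

section Representation

variable {n K : Type*} [Fintype n] [DecidableEq n] [Field K]

def IsBRep (q : K) (A0 Ap Am AC : Matrix n n K) : Prop :=
  ((q ^ 2 : K) • (A0 * Ap) - Ap * A0 = q • (AC * Ap)) ∧
    ((q⁻¹ ^ 2 : K) • (A0 * Am) - Am * A0 = -(q⁻¹ • (AC * Am))) ∧
    (Ap * Am - Am * Ap = ((q + q⁻¹) : K) • ((AC - (q - q⁻¹) • A0) * A0)) ∧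
    (AC * A0 = A0 * AC) ∧ (AC * Ap = Ap * AC) ∧ (AC * Am = Am * AC)

theorem isBRep_diagonal_permMatrix (τ : Perm n) {q c x : K} {μ κ : n → K} (hq : q ≠ 0)
    (hμ : ∀ j, q ^ 2 * μ (τ j) - μ j = q * c)
    (hκ : ∀ j, x * (κ j - κ (τ j)) = (q + q⁻¹) * ((c - (q - q⁻¹) * μ j) * μ j)) :
    IsBRep q (diagonal μ) (x • τ⁻¹.permMatrix K) (τ.permMatrix K * diagonal κ) (c • 1) := by
  refine ⟨?_, ?_, ?_, ?_, ?_, ?_⟩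
  · ext i j
    simp only [Perm.inv_def, Algebra.mul_smul_comm, Algebra.smul_mul_assoc, Matrix.sub_apply,
      Matrix.smul_apply, mul_permMatrix_apply, symm_symm, diagonal_apply, smul_eq_mul, mul_ite,
      mul_zero, mul_diagonal, PEquiv.toMatrix_apply, toPEquiv_apply, Option.mem_def,
      Option.some.injEq, symm_apply_eq, ite_mul, one_mul, zero_mul, mul_one]
    split_ifs with h
    · subst h
      linear_combination x * hμ j
    · simp
  · ext i j
    simp only [inv_pow, Matrix.sub_apply, Matrix.smul_apply, diagonal_mul, mul_diagonal,
      PEquiv.toMatrix_apply, toPEquiv_apply, Option.mem_def, Option.some.injEq, ite_mul, one_mul,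
      zero_mul, mul_ite, mul_zero, smul_eq_mul, Algebra.smul_mul_assoc, Matrix.neg_apply]
    split_ifs with h
    · subst h
      field_simp
      linear_combination (-κ (τ i)) * hμ i
    · simp
  · ext i j
    simp only [Algebra.smul_mul_assoc, Algebra.mul_smul_comm, Matrix.sub_apply, Matrix.smul_apply,
      permMatrix_mul_apply, Perm.coe_inv, mul_diagonal, PEquiv.toMatrix_apply, toPEquiv_apply,
      apply_symm_apply, Option.mem_def, Option.some.injEq, ite_mul, one_mul, zero_mul, smul_eq_mul,
      mul_ite, mul_zero, mul_permMatrix_apply, inv_inv, EmbeddingLike.apply_eq_iff_eq, one_apply,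
      mul_one, diagonal_apply]
    split_ifs with h
    · subst h
      linear_combination hκ i
    · simp
  all_goals exact (Commute.one_left _).smul_left c

theorem eq_bot_or_eq_top_of_diagonal_permMatrix_invariant {μ : n → K}
    (hμ : Function.Injective μ) {σ : Perm n} (hσ : σ.IsCycle) (hσs : σ.support = Finset.univ)
    {W : Submodule K (n → K)} (hD : ∀ v ∈ W, diagonal μ *ᵥ v ∈ W)
    (hP : ∀ v ∈ W, σ.permMatrix K *ᵥ v ∈ W) : W = ⊥ ∨ W = ⊤ := by
  refine or_iff_not_imp_left.2 fun hW => ?_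
  obtain ⟨v, hv, hv0⟩ := W.ne_bot_iff.1 hW
  obtain ⟨i, hvi⟩ := Function.ne_iff.1 hv0
  have hpow : ∀ k : ℕ, Pi.single ((σ⁻¹ ^ k) i) (1 : K) ∈ W := by
    intro k
    induction k with
    | zero => exact single_mem_of_diagonal_mulVec_mem hμ hD hv hvi
    | succ k ih => simpa only [pow_succ', Perm.mul_apply, permMatrix_mulVec_single] using hP _ ih
  have hmoves (x : n) : σ⁻¹ x ≠ x := by
    rw [← Perm.mem_support, Perm.support_inv, hσs]
    exact Finset.mem_univ x
  rw [eq_top_iff, ← (Pi.basisFun K n).span_eq, Submodule.span_le]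
  rintro _ ⟨j, rfl⟩
  obtain ⟨k, hk⟩ := hσ.inv.exists_pow_eq (hmoves i) (hmoves j)
  rw [Pi.basisFun_apply, ← hk]
  exact hpow k

end Representation

theorem sub_inv_ne_zero {K : Type*} [Field K] {q : K} (hq : q ≠ 0) (hq2 : q ^ 2 ≠ 1) :
    q - q⁻¹ ≠ 0 :=
  fun h => hq2 (by linear_combination q * h + mul_inv_cancel₀ hq)

theorem inv_pow_mul_qNum {q : ℂ} (hq : q ≠ 0) (p : ℕ) :
    q⁻¹ ^ p * qNum q p = (1 - q⁻¹ ^ (2 * p)) / (q - q⁻¹) := by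
  rw [qNum, mul_div_assoc', mul_sub, ← mul_pow, inv_mul_cancel₀ hq, one_pow, ← pow_add, two_mul]

section Coefficients

variable {K : Type*} [Field K] (q c x0 : K)

/-- The eigenvalue of `ρ₀` on `w_p`, as a function of `u = q^{-2p}`. -/
def diagCoeff (u : K) : K := (c - (c - (q - q⁻¹) * x0) * u) / (q - q⁻¹)

/-- `λ²x₊` times the coefficient of `ρ₋ w_p`, as a function of `u = q^{-2p}`. -/
def lowerCoeff (u : K) : K :=
  -(c ^ 2 - (q - q⁻¹) ^ 2 * (q ^ 2 * x0 ^ 2 - q * c * x0))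
    + (1 + q ^ 2) * c * (c - (q - q⁻¹) * x0) * u - q ^ 2 * (c - (q - q⁻¹) * x0) ^ 2 * u ^ 2

variable {q c x0}

theorem diagCoeff_sq_mul_sub (hq : q ≠ 0) (hq2 : q ^ 2 ≠ 1) (u : K) :
    q ^ 2 * diagCoeff q c x0 (q⁻¹ ^ 2 * u) - diagCoeff q c x0 u = q * c := by
  rw [diagCoeff, diagCoeff]
  have := sub_ne_zero.2 hq2
  field_simp
  ring

theorem lowerCoeff_sub (hq : q ≠ 0) (hq2 : q ^ 2 ≠ 1) (u : K) :
    lowerCoeff q c x0 u - lowerCoeff q c x0 (q⁻¹ ^ 2 * u) =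
      (q - q⁻¹) ^ 2 * ((q + q⁻¹) *
        ((c - (q - q⁻¹) * diagCoeff q c x0 u) * diagCoeff q c x0 u)) := by
  rw [lowerCoeff, lowerCoeff, diagCoeff]
  have := sub_ne_zero.2 hq2
  field_simp
  ring

theorem lowerCoeff_one (hq : q ≠ 0) : lowerCoeff q c x0 1 = 0 := by
  rw [lowerCoeff]
  field_simp
  ring

theorem diagCoeff_injective (hlam : q - q⁻¹ ≠ 0) (ha : c - (q - q⁻¹) * x0 ≠ 0) :
    Function.Injective (diagCoeff q c x0) := by
  intro u v huv
  rw [diagCoeff, diagCoeff, div_left_inj' hlam, sub_right_inj] at huv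
  exact mul_left_cancel₀ ha huv

end Coefficients

theorem diagCoeff_eq {q : ℂ} (hq : q ≠ 0) (hq2 : q ^ 2 ≠ 1) (c x0 : ℂ) (p : ℕ) :
    q⁻¹ ^ (2 * p) * x0 + q⁻¹ ^ p * qNum q p * c = diagCoeff q c x0 (q⁻¹ ^ (2 * p)) := by
  rw [inv_pow_mul_qNum hq, diagCoeff]
  have := sub_ne_zero.2 hq2
  field_simp
  ring

theorem isPrimitiveRoot_inv_sq {K : Type*} [Field K] {q : K} {l : ℕ} (hl : 0 < l)
    (hq2l : q ^ (2 * l) = 1) (hmin : ∀ m : ℕ, 0 < m → m < l → q ^ (2 * m) ≠ 1) :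
    IsPrimitiveRoot (q⁻¹ ^ 2) l := by
  rw [inv_pow]
  refine (IsPrimitiveRoot.mk_of_lt (q ^ 2) hl ?_ fun m hm hml => ?_).inv
  · rwa [← pow_mul]
  · rw [← pow_mul]
    exact hmin m hm hml

/-- the explicit l-dimensional (semi-periodic) action with
x₊ ≠ 0, c'₂ = q²x₀² − qcx₀ (basis w₀,…,w_{l−1}):
ρ_C w_p = c w_p, ρ₀ w_p = (q^{−2p}x₀ + q^{−p}[p]c) w_p, ρ₊ w_p = x₊ w_{p+1 mod l},
ρ₋ w₀ = 0 and ρ₋ w_p = x₊⁻¹λ⁻²(−d² + (1+q²)c(c−λx₀)q^{−2p} − q²(c−λx₀)²q^{−4p}) w_{p−1}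
defines a representation of B, irreducible whenever c − λx₀ ≠ 0. -/
theorem semiperiodic_rep (q : ℂ) (hq : q ≠ 0) (hq2 : q ^ 2 ≠ 1)
    (l : ℕ) (hl : 2 ≤ l) (hq2l : q ^ (2 * l) = 1)
    (hmin : ∀ m : ℕ, 0 < m → m < l → q ^ (2 * m) ≠ 1)
    (c x0 xp : ℂ) (hxp : xp ≠ 0) :
    let c2 : ℂ := q ^ 2 * x0 ^ 2 - q * c * x0
    let d2 : ℂ := c ^ 2 - (q - q⁻¹) ^ 2 * c2
    let MC : Matrix (Fin l) (Fin l) ℂ := c • 1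
    let M0 : Matrix (Fin l) (Fin l) ℂ :=
      Matrix.diagonal fun p => q⁻¹ ^ (2 * (p : ℕ)) * x0 + q⁻¹ ^ (p : ℕ) * qNum q (p : ℕ) * c
    let Mp : Matrix (Fin l) (Fin l) ℂ :=
      Matrix.of fun i j => if (i : ℕ) = ((j : ℕ) + 1) % l then xp else 0
    let Mm : Matrix (Fin l) (Fin l) ℂ :=
      Matrix.of fun i j =>
        if (i : ℕ) + 1 = (j : ℕ) then
          xp⁻¹ * ((q - q⁻¹) ^ 2)⁻¹ *
            (-d2 + (1 + q ^ 2) * c * (c - (q - q⁻¹) * x0) * q⁻¹ ^ (2 * (j : ℕ))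
              - q ^ 2 * (c - (q - q⁻¹) * x0) ^ 2 * q⁻¹ ^ (4 * (j : ℕ)))
        else 0
    (((q ^ 2 : ℂ) • (M0 * Mp) - Mp * M0 = q • (MC * Mp)) ∧
     ((q⁻¹ ^ 2 : ℂ) • (M0 * Mm) - Mm * M0 = -(q⁻¹ • (MC * Mm))) ∧
     (Mp * Mm - Mm * Mp = ((q + q⁻¹) : ℂ) • ((MC - (q - q⁻¹) • M0) * M0)) ∧
     (MC * M0 = M0 * MC) ∧ (MC * Mp = Mp * MC) ∧ (MC * Mm = Mm * MC)) ∧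
    (c - (q - q⁻¹) * x0 ≠ 0 →
      ∀ W : Submodule ℂ (Fin l → ℂ),
        (∀ v ∈ W, M0.mulVec v ∈ W) → (∀ v ∈ W, Mp.mulVec v ∈ W) →
        (∀ v ∈ W, Mm.mulVec v ∈ W) → (∀ v ∈ W, MC.mulVec v ∈ W) →
        W = ⊥ ∨ W = ⊤) := by
  intro c2 d2 MC M0 Mp Mm
  have hζ := isPrimitiveRoot_inv_sq (by omega) hq2l hmin
  let f : ℕ → ℂ := fun p => xp⁻¹ * ((q - q⁻¹) ^ 2)⁻¹ * lowerCoeff q c x0 ((q⁻¹ ^ 2) ^ p)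
  let μ : Fin l → ℂ := fun j => diagCoeff q c x0 ((q⁻¹ ^ 2) ^ (j : ℕ))
  have hM0 : M0 = diagonal μ := by
    simp only [M0, μ, ← pow_mul, diagCoeff_eq hq hq2]
  have hMp : Mp = xp • (finRotate l)⁻¹.permMatrix ℂ := of_eq_succ_mod_eq_smul_permMatrix xp
  have hMm : Mm = (finRotate l).permMatrix ℂ * diagonal (fun j : Fin l => f j) := by
    rw [← of_succ_eq_eq_permMatrix_mul_diagonal f (by simp [f, lowerCoeff_one hq])]
    ext i j
    simp only [Mm, d2, c2, f, lowerCoeff, of_apply]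
    split_ifs <;> ring
  refine ⟨?_, fun ha W h0 hp _ _ => ?_⟩
  · rw [hM0, hMp, hMm]
    refine isBRep_diagonal_permMatrix _ hq (fun j => ?_) (fun j => ?_)
    · simp only [μ, pow_val_finRotate hζ.pow_eq_one]
      exact diagCoeff_sq_mul_sub hq hq2 _
    · simp only [f, μ, pow_val_finRotate hζ.pow_eq_one]
      rw [← mul_sub, lowerCoeff_sub hq hq2]
      field_simp
  · have hμ : Function.Injective μ := (diagCoeff_injective (sub_inv_ne_zero hq hq2) ha).comp
      fun i j h => Fin.ext (hζ.pow_inj i.isLt j.isLt h)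
    refine eq_bot_or_eq_top_of_diagonal_permMatrix_invariant hμ (isCycle_finRotate_of_le hl).inv
      (by rw [Perm.support_inv, support_finRotate_of_le hl]) (hM0 ▸ h0) fun v hv => ?_
    have := W.smul_mem xp⁻¹ (hp v hv)
    rwa [hMp, smul_mulVec, smul_smul, inv_mul_cancel₀ hxp, one_smul] at this

end SL2q
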